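/- arXiv:1303.3776 — 2 statements merged into one kernel-verified Lean document; each statement's English description precedes it below -/
import Mathlib

section
/- Let n and m be positive integers with 5 ≤ n ≤ 2m+1. Let C_i = (i_1,…,i_p) and C_j = (j_1,…,j_q) be disjoint cycles in S_n, both belonging to L_m, such that there exist indices r ∈ {1,…,p} and s ∈ {1,…,q} with |i_t − j_s| ≤ m for all t = 1,…,p and |j_u − i_r| ≤ m for all u = 1,…,q. Then the product C_i C_j can be written as a product of p + q transpositions from G_m. -/
/-
Rotate the cycles so that they start at `r` and `s`. Then `(r i₂ … i_p)` is the conjugate by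
`(s r)` of the star product `(s i_p) ⋯ (s i₂)`, and likewise `(s j₂ … j_q)` is
`(r s)(r j_q) ⋯ (r j₂)(r s)`. In the product the two middle copies of `(r s)` cancel, leaving
`p + q` transpositions, each joining `s` to a term of `C_i` or `r` to a term of `C_j`; by
condition (rs) all of them lie in `G_m`.
-/

/-- A permutation of `Fin n` is a transposition `(i, j)` with `j - i ≤ m`
(an element of the set `G_m` of the paper). -/
def IsGmTransposition (n m : ℕ) (τ : Equiv.Perm (Fin n)) : Prop :=
  ∃ i j : Fin n, i < j ∧ j.val - i.val ≤ m ∧ τ = Equiv.swap i j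

/-- A cycle, given by the list of its terms, belongs to `L_m` if for each of its terms `x`
there is a term `y` with `|x - y| > m`. -/
def InLm (n m : ℕ) (L : List (Fin n)) : Prop :=
  ∀ x ∈ L, ∃ y ∈ L, (m : ℤ) < |(x.val : ℤ) - (y.val : ℤ)|

namespace List

variable {α : Type*} [DecidableEq α]

theorem formPerm_cons_eq_prod_map_swap {x : α} {l : List α} (h : (x :: l).Nodup) :
    formPerm (x :: l) = (l.reverse.map (Equiv.swap x)).prod := by
  induction l using reverseRecOn with
  | nil => simp
  | append_singleton l a ih =>
    have hrot : formPerm (x :: (l ++ [a])) = formPerm (a :: x :: l) :=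
      formPerm_eq_of_isRotated h (isRotated_concat a (x :: l))
    rw [hrot, formPerm_cons_cons, ih (h.sublist ((sublist_append_left l [a]).cons_cons x)),
      Equiv.swap_comm]
    simp

theorem formPerm_cons_eq_conj_prod_map_swap {x s : α} {l : List α} (h : (x :: l).Nodup)
    (hs : s ∉ x :: l) :
    formPerm (x :: l) =
      Equiv.swap s x * (l.reverse.map (Equiv.swap s)).prod * Equiv.swap s x := by
  have hconj : ∀ z ∈ l.reverse,
      MulAut.conj (Equiv.swap s x) (Equiv.swap s z) = Equiv.swap x z := by
    intro z hz
    rw [mem_reverse] at hz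
    rw [MulAut.conj_apply, Equiv.swap_inv, Equiv.swap_comm s z]
    exact Equiv.swap_mul_swap_mul_swap (fun hzs => hs (hzs ▸ mem_cons_of_mem x hz))
      (fun hzx => (nodup_cons.mp h).1 (hzx ▸ hz))
  calc formPerm (x :: l)
        = (l.reverse.map (MulAut.conj (Equiv.swap s x) ∘ Equiv.swap s)).prod := by
        rw [formPerm_cons_eq_prod_map_swap h]; exact congrArg prod (map_congr_left hconj).symm
    _ = Equiv.swap s x * (l.reverse.map (Equiv.swap s)).prod * Equiv.swap s x := by
        rw [← map_map, ← map_list_prod, MulAut.conj_apply, Equiv.swap_inv]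

theorem formPerm_cons_mul_formPerm_cons {r s : α} {t₁ t₂ : List α} (h₁ : (r :: t₁).Nodup)
    (h₂ : (s :: t₂).Nodup) (hs : s ∉ r :: t₁) (hr : r ∉ s :: t₂) :
    formPerm (r :: t₁) * formPerm (s :: t₂) =
      (Equiv.swap s r :: (t₁.reverse.map (Equiv.swap s) ++ t₂.reverse.map (Equiv.swap r) ++
        [Equiv.swap s r])).prod := by
  rw [formPerm_cons_eq_conj_prod_map_swap h₁ hs, formPerm_cons_eq_conj_prod_map_swap h₂ hr,
    Equiv.swap_comm r s]
  simp only [prod_cons, prod_append, prod_nil, mul_one, mul_assoc, Equiv.swap_mul_self_mul]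

omit [DecidableEq α] in
theorem exists_cons_isRotated_of_mem {L : List α} {r : α} (hr : r ∈ L) : ∃ t, (r :: t) ~r L := by
  obtain ⟨u, v, rfl⟩ := append_of_mem hr
  exact ⟨v ++ u, isRotated_append (l := r :: v)⟩

theorem exists_prod_swap_eq_formPerm_mul_formPerm {L₁ L₂ : List α} (h₁ : L₁.Nodup)
    (h₂ : L₂.Nodup) (hdisj : L₁.Disjoint L₂) {r s : α} (hr : r ∈ L₁) (hs : s ∈ L₂) :
    ∃ l : List (Equiv.Perm α), l.length = L₁.length + L₂.length ∧
      (∀ τ ∈ l, (∃ x ∈ L₁, τ = Equiv.swap s x) ∨ ∃ y ∈ L₂, τ = Equiv.swap r y) ∧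
      l.prod = L₁.formPerm * L₂.formPerm := by
  obtain ⟨t₁, ht₁⟩ := exists_cons_isRotated_of_mem hr
  obtain ⟨t₂, ht₂⟩ := exists_cons_isRotated_of_mem hs
  have hs₁ : s ∉ r :: t₁ := fun h => hdisj (ht₁.mem_iff.mp h) hs
  have hr₂ : r ∉ s :: t₂ := fun h => hdisj hr (ht₂.mem_iff.mp h)
  refine ⟨_, ?_, ?_, (formPerm_cons_mul_formPerm_cons (ht₁.nodup_iff.mpr h₁)
    (ht₂.nodup_iff.mpr h₂) hs₁ hr₂).symm.trans ?_⟩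
  · simp only [← ht₁.perm.length_eq, ← ht₂.perm.length_eq, length_cons, length_append,
      length_map, length_reverse, length_nil]
    omega
  · simp only [mem_cons, mem_append, mem_map, mem_reverse, not_mem_nil, or_false]
    rintro τ (rfl | (⟨x, hx, rfl⟩ | ⟨y, hy, rfl⟩) | rfl)
    · exact .inl ⟨r, hr, rfl⟩
    · exact .inl ⟨x, ht₁.mem_iff.mp (mem_cons_of_mem r hx), rfl⟩
    · exact .inr ⟨y, ht₂.mem_iff.mp (mem_cons_of_mem s hy), rfl⟩
    · exact .inl ⟨r, hr, rfl⟩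
  · rw [formPerm_eq_of_isRotated (ht₁.nodup_iff.mpr h₁) ht₁,
      formPerm_eq_of_isRotated (ht₂.nodup_iff.mpr h₂) ht₂]

end List

theorem isGmTransposition_swap {n m : ℕ} {a b : Fin n} (hab : a ≠ b)
    (h : |(a.val : ℤ) - b.val| ≤ m) : IsGmTransposition n m (Equiv.swap a b) := by
  have h' := abs_le.mp h
  rcases lt_or_gt_of_ne hab with hlt | hlt
  · exact ⟨a, b, hlt, by omega, rfl⟩
  · exact ⟨b, a, hlt, by omega, Equiv.swap_comm a b⟩

theorem disjoint_cycles_in_Lm_factorization_general (n m : ℕ) (L1 L2 : List (Fin n))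
    (hnd1 : L1.Nodup) (hnd2 : L2.Nodup)
    (hdisj : ∀ x ∈ L1, x ∉ L2)
    (hrs : ∃ r ∈ L1, ∃ s ∈ L2,
      (∀ x ∈ L1, |(x.val : ℤ) - (s.val : ℤ)| ≤ m) ∧
      (∀ y ∈ L2, |(y.val : ℤ) - (r.val : ℤ)| ≤ m)) :
    ∃ l : List (Equiv.Perm (Fin n)),
      l.length = L1.length + L2.length ∧ (∀ τ ∈ l, IsGmTransposition n m τ) ∧
      l.prod = L1.formPerm * L2.formPerm := by
  obtain ⟨r, hr, s, hs, hclose₁, hclose₂⟩ := hrs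
  obtain ⟨l, hlen, hswap, hprod⟩ := List.exists_prod_swap_eq_formPerm_mul_formPerm hnd1 hnd2
    (fun x h₁ h₂ => hdisj x h₁ h₂) hr hs
  refine ⟨l, hlen, fun τ hτ => ?_, hprod⟩
  rcases hswap τ hτ with ⟨x, hx, rfl⟩ | ⟨y, hy, rfl⟩
  · exact isGmTransposition_swap (fun h => hdisj x hx (h ▸ hs))
      (abs_sub_comm (s.val : ℤ) x ▸ hclose₁ x hx)
  · exact isGmTransposition_swap (fun h => hdisj r hr (h ▸ hy))
      (abs_sub_comm (r.val : ℤ) y ▸ hclose₂ y hy)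

/-- Let `5 ≤ n ≤ 2m + 1` and let `C_i = (i_1, …, i_p)`, `C_j = (j_1, …, j_q)` be disjoint
cycles in `S_n` (given by disjoint nonempty lists `L1`, `L2` of distinct terms), both in
`L_m`.  If there are a term `r` of `C_i` and a term `s` of `C_j` with `|i_t - s| ≤ m` for
all terms `i_t` of `C_i` and `|j_u - r| ≤ m` for all terms `j_u` of `C_j` (condition (rs)),
then `C_i C_j` can be written as a product of `p + q` transpositions from `G_m`. -/
theorem disjoint_cycles_in_Lm_factorization (n m : ℕ) (hm : 0 < m) (h5 : 5 ≤ n)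
    (hn : n ≤ 2 * m + 1) (L1 L2 : List (Fin n))
    (hnd1 : L1.Nodup) (hnd2 : L2.Nodup) (hne1 : L1 ≠ []) (hne2 : L2 ≠ [])
    (hdisj : ∀ x ∈ L1, x ∉ L2) (hLm1 : InLm n m L1) (hLm2 : InLm n m L2)
    (hrs : ∃ r ∈ L1, ∃ s ∈ L2,
      (∀ x ∈ L1, |(x.val : ℤ) - (s.val : ℤ)| ≤ m) ∧
      (∀ y ∈ L2, |(y.val : ℤ) - (r.val : ℤ)| ≤ m)) :
    ∃ l : List (Equiv.Perm (Fin n)),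
      l.length = L1.length + L2.length ∧ (∀ τ ∈ l, IsGmTransposition n m τ) ∧
      l.prod = L1.formPerm * L2.formPerm :=
  disjoint_cycles_in_Lm_factorization_general n m L1 L2 hnd1 hnd2 hdisj hrs
end

section
/- Let n and m be positive integers with 5 ≤ n ≤ 2m+1, and let σ ∈ S_n have disjoint cycle decomposition C_1⋯C_r (fixed points counted as 1-cycles). If exactly s of the cycles C_i belong to L_m, and among these s cycles there are t pairwise disjoint pairs (C_i, C_j) each satisfying condition (rs), then d(1,σ,m) ≤ n − r + 2s − 2t. -/
/-- `d(1, σ, m)`: the minimum number of transpositions from `G_m` whose product is `σ`. -/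
noncomputable def permDist (n m : ℕ) (σ : Equiv.Perm (Fin n)) : ℕ :=
  sInf {k | ∃ l : List (Equiv.Perm (Fin n)),
    l.length = k ∧ (∀ τ ∈ l, IsGmTransposition n m τ) ∧ l.prod = σ}

/-- Condition (rs) for two cycles, given by the lists of their terms: there are a term `r`
of the first and a term `s` of the second with every term of the first within `m` of `s`
and every term of the second within `m` of `r`. -/
def CondRS (n m : ℕ) (L1 L2 : List (Fin n)) : Prop :=
  ∃ r ∈ L1, ∃ s ∈ L2,
    (∀ x ∈ L1, |(x.val : ℤ) - (s.val : ℤ)| ≤ m) ∧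
    (∀ y ∈ L2, |(y.val : ℤ) - (r.val : ℤ)| ≤ m)


/-!
Bound each cycle of `σ` separately by a word in `G_m` and multiply the words, the cycles being
disjoint and hence commuting. A cycle `C ∉ L_m` has a term `x` within `m` of all its terms;
rotated to start at `x`, it is the star product of the transpositions `(x y)`, `y ∈ C \ {x}`,
which costs `|C| - 1`. Because `n ≤ 2m + 1`, the point `c = min m (n - 1)` is within `m` of every
point, so it lies on no cycle `C = (a …) ∈ L_m`, and `C` is the star at `c` of the other terms
conjugated by `(c a)`, which costs `|C| + 1`. For a pair satisfying (rs), the relabelling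
`r ↔ s` writes the two cycles as a star at `s` and a star at `r`, each conjugated by `(r s)`; two
of the four conjugating transpositions cancel, which saves `2` per pair.
-/

open Equiv

namespace List

theorem exists_isRotated_cons {α : Type*} {x : α} {l : List α} (hx : x ∈ l) :
    ∃ u, l ~r x :: u := by
  obtain ⟨s, t, rfl⟩ := append_of_mem hx
  exact ⟨t ++ s, isRotated_append⟩

theorem Pairwise.disjoint_get {α : Type*} {cs : List (List α)} (h : cs.Pairwise List.Disjoint)
    {i j : Fin cs.length} (hij : i ≠ j) : (cs.get i).Disjoint (cs.get j) := by
  rcases hij.lt_or_gt with hlt | hlt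
  · exact pairwise_iff_get.1 h i j hlt
  · exact (pairwise_iff_get.1 h j i hlt).symm

variable {α : Type*} [DecidableEq α]

theorem formPerm_map_perm (e : Equiv.Perm α) :
    ∀ l : List α, formPerm (l.map e) = e * formPerm l * e⁻¹
  | [] => by simp
  | [_] => by simp
  | x :: y :: l => by
    rw [map_cons, map_cons, formPerm_cons_cons, ← map_cons, formPerm_map_perm e (y :: l),
      Equiv.swap_apply_apply, formPerm_cons_cons]
    group

theorem formPerm_cons_eq_swap_mul_formPerm_cons_mul_swap {a b : α} {l : List α} (ha : a ∉ l)
    (hb : b ∉ l) :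
    formPerm (a :: l) = Equiv.swap a b * formPerm (b :: l) * Equiv.swap a b := by
  have hmap : (b :: l).map (Equiv.swap a b) = a :: l := by
    rw [map_cons, swap_apply_right, map_congr_left (g := id), map_id]
    intro y hy
    exact swap_apply_of_ne_of_ne (ne_of_mem_of_not_mem hy ha) (ne_of_mem_of_not_mem hy hb)
  rw [← hmap, formPerm_map_perm, swap_inv]

theorem formPerm_cons_cons_eq_formPerm_cons_mul_swap {x a : α} {l : List α}
    (h : (x :: a :: l).Nodup) : formPerm (x :: a :: l) = formPerm (x :: l) * Equiv.swap x a := by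
  simp only [nodup_cons, mem_cons, not_or] at h
  rw [formPerm_cons_cons, formPerm_cons_eq_swap_mul_formPerm_cons_mul_swap h.2.1 h.1.2,
    Equiv.swap_comm a x, ← mul_assoc, ← mul_assoc, Equiv.swap_mul_self, one_mul]

theorem Disjoint.commute_formPerm {l l' : List α} (h : l.Disjoint l') :
    Commute l.formPerm l'.formPerm :=
  Equiv.Perm.Disjoint.commute fun x => by
    by_cases hx : x ∈ l
    · exact Or.inr (formPerm_apply_of_notMem fun hx' => h hx hx')
    · exact Or.inl (formPerm_apply_of_notMem hx)

end List

section WordLength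

variable {M : Type*} [Monoid M] (T : Set M)

/-- The bound is an integer so that costs such as `|C| - 1` are not truncated. -/
def WordLengthLE (x : M) (k : ℤ) : Prop :=
  ∃ l : List M, (∀ y ∈ l, y ∈ T) ∧ l.prod = x ∧ (l.length : ℤ) ≤ k

variable {T}

namespace WordLengthLE

theorem one : WordLengthLE T 1 0 :=
  ⟨[], by simp, rfl, le_rfl⟩

theorem of_mem {x : M} (hx : x ∈ T) : WordLengthLE T x 1 :=
  ⟨[x], by simpa using hx, List.prod_singleton, by simp⟩

theorem mono {x : M} {k k' : ℤ} (h : WordLengthLE T x k) (hk : k ≤ k') : WordLengthLE T x k' :=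
  let ⟨l, hT, hprod, hlen⟩ := h
  ⟨l, hT, hprod, hlen.trans hk⟩

theorem mul {x y : M} {k k' : ℤ} (hx : WordLengthLE T x k) (hy : WordLengthLE T y k') :
    WordLengthLE T (x * y) (k + k') := by
  obtain ⟨l, hT, rfl, hlen⟩ := hx
  obtain ⟨l', hT', rfl, hlen'⟩ := hy
  refine ⟨l ++ l', ?_, List.prod_append, ?_⟩
  · simpa only [List.mem_append, or_imp, forall_and] using ⟨hT, hT'⟩
  · push_cast [List.length_append]
    omega

variable {ι : Type*} {f : ι → M} {cost : ι → ℤ}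

theorem noncommProd {I : Finset ι} (hf : ∀ i ∈ I, WordLengthLE T (f i) (cost i)) (comm) :
    WordLengthLE T (I.noncommProd f comm) (∑ i ∈ I, cost i) := by
  classical
  induction I using Finset.induction_on with
  | empty => simpa using one
  | insert a I ha ih =>
    rw [Finset.noncommProd_insert_of_notMem _ _ _ _ ha, Finset.sum_insert ha]
    exact (hf a (Finset.mem_insert_self a I)).mul
      (ih (fun i hi => hf i (Finset.mem_insert_of_mem hi)) _)

theorem noncommProd_of_pairs [DecidableEq ι] (hcomm : Pairwise fun i j => Commute (f i) (f j))
    (hf : ∀ i, WordLengthLE T (f i) (cost i)) {Q : Finset (ι × ι)}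
    (hQ : ∀ p ∈ Q, p.1 ≠ p.2 ∧ WordLengthLE T (f p.1 * f p.2) (cost p.1 + cost p.2 - 2))
    (hQdisj : ∀ p ∈ Q, ∀ q ∈ Q, p ≠ q → p.1 ≠ q.1 ∧ p.1 ≠ q.2 ∧ p.2 ≠ q.1 ∧ p.2 ≠ q.2)
    (I : Finset ι) (hI : ∀ p ∈ Q, p.1 ∈ I ∧ p.2 ∈ I) :
    WordLengthLE T (I.noncommProd f (hcomm.set_pairwise I)) (∑ i ∈ I, cost i - 2 * Q.card) := by
  induction Q using Finset.induction_on generalizing I with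
  | empty => simpa using noncommProd (fun i _ => hf i) _
  | insert p Q hp ih =>
    obtain ⟨hne, hpair⟩ := hQ p (Finset.mem_insert_self p Q)
    obtain ⟨h₁, h₂⟩ := hI p (Finset.mem_insert_self p Q)
    have h₂' : p.2 ∈ I.erase p.1 := Finset.mem_erase.2 ⟨hne.symm, h₂⟩
    have hrest := ih (fun q hq => hQ q (Finset.mem_insert_of_mem hq))
      (fun q hq q' hq' => hQdisj q (Finset.mem_insert_of_mem hq) q' (Finset.mem_insert_of_mem hq'))
      ((I.erase p.1).erase p.2) fun q hq => by
        obtain ⟨hq₁, hq₂⟩ := hI q (Finset.mem_insert_of_mem hq)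
        obtain ⟨d₁, d₂, d₃, d₄⟩ := hQdisj q (Finset.mem_insert_of_mem hq) p
          (Finset.mem_insert_self p Q) (ne_of_mem_of_not_mem hq hp)
        simp [*]
    convert hpair.mul hrest using 1
    · rw [mul_assoc, Finset.mul_noncommProd_erase _ h₂' f (hcomm.set_pairwise _)
        (hcomm.set_pairwise _), Finset.mul_noncommProd_erase _ h₁ f (hcomm.set_pairwise _)
        (hcomm.set_pairwise _)]
    · rw [← Finset.add_sum_erase I _ h₁, ← Finset.add_sum_erase _ _ h₂',
        Finset.card_insert_of_notMem hp]
      push_cast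
      ring

end WordLengthLE

end WordLength

section Cycles

variable {α : Type*} [DecidableEq α] {T : Set (Perm α)}

theorem wordLengthLE_formPerm_cons {x : α} {l : List α} (hl : (x :: l).Nodup)
    (hT : ∀ y ∈ l, swap x y ∈ T) : WordLengthLE T (x :: l).formPerm l.length := by
  induction l with
  | nil => simpa using WordLengthLE.one
  | cons a l ih =>
    have hl' : (x :: l).Nodup := hl.sublist ((l.sublist_cons_self a).cons_cons x)
    rw [List.formPerm_cons_cons_eq_formPerm_cons_mul_swap hl, List.length_cons, Nat.cast_succ]
    exact (ih hl' fun y hy => hT y (List.mem_cons_of_mem a hy)).mul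
      (WordLengthLE.of_mem (hT a List.mem_cons_self))

theorem wordLengthLE_formPerm_of_mem {x : α} {l : List α} (hl : l.Nodup) (hx : x ∈ l)
    (hT : ∀ y ∈ l, y ≠ x → swap x y ∈ T) : WordLengthLE T l.formPerm (l.length - 1) := by
  obtain ⟨u, hu⟩ := List.exists_isRotated_cons hx
  have hxu : (x :: u).Nodup := hu.nodup_iff.1 hl
  rw [List.formPerm_eq_of_isRotated hl hu, hu.perm.length_eq, List.length_cons, Nat.cast_succ,
    add_sub_cancel_right]
  refine wordLengthLE_formPerm_cons hxu fun y hy =>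
    hT y (hu.mem_iff.2 (List.mem_cons_of_mem x hy)) ?_
  rintro rfl
  exact (List.nodup_cons.1 hxu).1 hy

theorem wordLengthLE_formPerm_of_notMem {c : α} {l : List α} (hl : l.Nodup) (hne : l ≠ [])
    (hc : c ∉ l) (hT : ∀ y ∈ l, swap c y ∈ T) : WordLengthLE T l.formPerm (l.length + 1) := by
  obtain ⟨a, u, rfl⟩ := List.exists_cons_of_ne_nil hne
  simp only [List.nodup_cons, List.mem_cons, not_or] at hl hc
  have hca : swap c a ∈ T := hT a List.mem_cons_self
  have hstar : WordLengthLE T (c :: u).formPerm u.length :=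
    wordLengthLE_formPerm_cons (List.nodup_cons.2 ⟨hc.2, hl.2⟩)
      fun y hy => hT y (List.mem_cons_of_mem a hy)
  rw [List.formPerm_cons_eq_swap_mul_formPerm_cons_mul_swap hl.1 hc.2, swap_comm,
    List.length_cons]
  convert ((WordLengthLE.of_mem hca).mul hstar).mul (WordLengthLE.of_mem hca) using 1
  push_cast
  ring

theorem wordLengthLE_formPerm_mul_formPerm {l₁ l₂ : List α} (h₁ : l₁.Nodup) (h₂ : l₂.Nodup)
    (hdisj : l₁.Disjoint l₂) {r s : α} (hr : r ∈ l₁) (hs : s ∈ l₂)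
    (hT₁ : ∀ x ∈ l₁, swap s x ∈ T) (hT₂ : ∀ y ∈ l₂, swap r y ∈ T) :
    WordLengthLE T (l₁.formPerm * l₂.formPerm) (l₁.length + l₂.length) := by
  obtain ⟨u, hu⟩ := List.exists_isRotated_cons hr
  obtain ⟨v, hv⟩ := List.exists_isRotated_cons hs
  have hru : (r :: u).Nodup := hu.nodup_iff.1 h₁
  have hsv : (s :: v).Nodup := hv.nodup_iff.1 h₂
  have hsu : s ∉ u := fun h => hdisj (hu.mem_iff.2 (List.mem_cons_of_mem r h)) hs
  have hrv : r ∉ v := fun h => hdisj hr (hv.mem_iff.2 (List.mem_cons_of_mem s h))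
  have hw : swap r s ∈ T := swap_comm s r ▸ hT₁ r hr
  have hstar₁ : WordLengthLE T (s :: u).formPerm u.length :=
    wordLengthLE_formPerm_cons (List.nodup_cons.2 ⟨hsu, (List.nodup_cons.1 hru).2⟩)
      fun x hx => hT₁ x (hu.mem_iff.2 (List.mem_cons_of_mem r hx))
  have hstar₂ : WordLengthLE T (r :: v).formPerm v.length :=
    wordLengthLE_formPerm_cons (List.nodup_cons.2 ⟨hrv, (List.nodup_cons.1 hsv).2⟩)
      fun y hy => hT₂ y (hv.mem_iff.2 (List.mem_cons_of_mem s hy))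
  have hcancel : swap r s * (s :: u).formPerm * swap r s * (swap r s * (r :: v).formPerm * swap r s)
      = swap r s * ((s :: u).formPerm * (r :: v).formPerm) * swap r s := by
    simp only [mul_assoc, swap_mul_self_mul]
  rw [List.formPerm_eq_of_isRotated h₁ hu, List.formPerm_eq_of_isRotated h₂ hv,
    hu.perm.length_eq, hv.perm.length_eq,
    List.formPerm_cons_eq_swap_mul_formPerm_cons_mul_swap (List.nodup_cons.1 hru).1 hsu,
    List.formPerm_cons_eq_swap_mul_formPerm_cons_mul_swap (List.nodup_cons.1 hsv).1 hrv,
    swap_comm s r, hcancel]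
  convert ((WordLengthLE.of_mem hw).mul (hstar₁.mul hstar₂)).mul (WordLengthLE.of_mem hw) using 1
  push_cast [List.length_cons]
  ring

end Cycles

section Decomposition

variable {α : Type*} [DecidableEq α] {cs : List (List α)}

theorem pairwise_commute_formPerm_get (hdisj : cs.Pairwise List.Disjoint) :
    Pairwise fun i j : Fin cs.length => Commute (cs.get i).formPerm (cs.get j).formPerm :=
  fun _ _ hij => (hdisj.disjoint_get hij).commute_formPerm

theorem prod_map_formPerm_eq_noncommProd
    (hcomm : Pairwise fun i j : Fin cs.length => Commute (cs.get i).formPerm (cs.get j).formPerm) :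
    (cs.map List.formPerm).prod =
      Finset.univ.noncommProd (fun i => (cs.get i).formPerm) (hcomm.set_pairwise _) := by
  conv_lhs => rw [← List.map_get_finRange cs, List.map_map]
  exact (Finset.noncommProd_toFinset _ _ (hcomm.set_pairwise _) (List.nodup_finRange _)).symm.trans
    (Finset.noncommProd_congr (List.toFinset_finRange _) (fun _ _ => rfl) _)

theorem sum_map_length_eq_card [Fintype α] (hnd : ∀ c ∈ cs, c.Nodup)
    (hdisj : cs.Pairwise List.Disjoint) (hcover : ∀ x, ∃ c ∈ cs, x ∈ c) :
    (cs.map List.length).sum = Fintype.card α := by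
  have hcover' : cs.flatten.toFinset = Finset.univ :=
    Finset.eq_univ_of_forall fun x => List.mem_toFinset.2 (List.mem_flatten.2 (hcover x))
  rw [← List.length_flatten, ← List.toFinset_card_of_nodup (List.nodup_flatten.2 ⟨hnd, hdisj⟩),
    hcover', Finset.card_univ]

end Decomposition

section Gm

variable {n m : ℕ}

theorem isGmTransposition_swap_s12 {x y : Fin n} (hxy : x ≠ y)
    (h : |(x.val : ℤ) - (y.val : ℤ)| ≤ m) : IsGmTransposition n m (swap x y) := by
  obtain ⟨h₁, h₂⟩ := abs_le.1 h
  rcases hxy.lt_or_gt with hlt | hlt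
  · exact ⟨x, y, hlt, by omega, rfl⟩
  · exact ⟨y, x, hlt, by omega, swap_comm x y⟩

theorem permDist_le_of_wordLengthLE {σ : Perm (Fin n)} {k : ℤ}
    (h : WordLengthLE {τ | IsGmTransposition n m τ} σ k) : (permDist n m σ : ℤ) ≤ k := by
  obtain ⟨l, hT, hprod, hlen⟩ := h
  have hdist : permDist n m σ ≤ l.length := Nat.sInf_le ⟨l, rfl, hT, hprod⟩
  exact (Nat.cast_le.2 hdist).trans hlen

theorem exists_forall_abs_sub_le (hn : n ≤ 2 * m + 1) [NeZero n] :
    ∃ c : Fin n, ∀ y : Fin n, |(c.val : ℤ) - (y.val : ℤ)| ≤ m := by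
  have hpos := NeZero.pos n
  refine ⟨⟨min m (n - 1), by omega⟩, fun y => ?_⟩
  have := y.isLt
  rw [abs_le]
  constructor <;> simp only <;> omega

open Classical in
noncomputable def cycleCost (n m : ℕ) (l : List (Fin n)) : ℤ :=
  l.length - 1 + if InLm n m l then 2 else 0

theorem cycleCost_of_inLm {l : List (Fin n)} (hL : InLm n m l) :
    cycleCost n m l = l.length + 1 := by
  rw [cycleCost, if_pos hL]
  ring

theorem cycleCost_of_not_inLm {l : List (Fin n)} (hL : ¬ InLm n m l) :
    cycleCost n m l = l.length - 1 := by
  rw [cycleCost, if_neg hL, add_zero]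

theorem wordLengthLE_formPerm_of_not_inLm {l : List (Fin n)} (hl : l.Nodup)
    (hL : ¬ InLm n m l) :
    WordLengthLE {τ | IsGmTransposition n m τ} l.formPerm (l.length - 1) := by
  simp only [InLm, not_forall, not_exists, not_and, not_lt] at hL
  obtain ⟨x, hx, hclose⟩ := hL
  exact wordLengthLE_formPerm_of_mem hl hx fun y hy hyx =>
    isGmTransposition_swap_s12 hyx.symm (hclose y hy)

theorem wordLengthLE_formPerm_of_inLm (hn : n ≤ 2 * m + 1) {l : List (Fin n)} (hl : l.Nodup)
    (hne : l ≠ []) (hL : InLm n m l) :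
    WordLengthLE {τ | IsGmTransposition n m τ} l.formPerm (l.length + 1) := by
  obtain ⟨y₀, -⟩ := List.exists_mem_of_ne_nil l hne
  have : NeZero n := NeZero.of_pos y₀.pos
  obtain ⟨c, hc⟩ := exists_forall_abs_sub_le hn
  have hcl : c ∉ l := fun hcl =>
    let ⟨y, _, hy⟩ := hL c hcl
    (hc y).not_gt hy
  exact wordLengthLE_formPerm_of_notMem hl hne hcl fun y hy =>
    isGmTransposition_swap_s12 (ne_of_mem_of_not_mem hy hcl).symm (hc y)

theorem wordLengthLE_formPerm_cycleCost (hn : n ≤ 2 * m + 1) {l : List (Fin n)} (hl : l.Nodup)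
    (hne : l ≠ []) :
    WordLengthLE {τ | IsGmTransposition n m τ} l.formPerm (cycleCost n m l) := by
  by_cases hL : InLm n m l
  · exact cycleCost_of_inLm hL ▸ wordLengthLE_formPerm_of_inLm hn hl hne hL
  · exact cycleCost_of_not_inLm hL ▸ wordLengthLE_formPerm_of_not_inLm hl hL

theorem wordLengthLE_formPerm_mul_of_condRS {l₁ l₂ : List (Fin n)} (h₁ : l₁.Nodup)
    (h₂ : l₂.Nodup) (hdisj : l₁.Disjoint l₂) (hrs : CondRS n m l₁ l₂) :
    WordLengthLE {τ | IsGmTransposition n m τ} (l₁.formPerm * l₂.formPerm)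
      (l₁.length + l₂.length) := by
  obtain ⟨r, hr, s, hs, hs₁, hr₂⟩ := hrs
  refine wordLengthLE_formPerm_mul_formPerm h₁ h₂ hdisj hr hs (fun x hx => ?_) (fun y hy => ?_)
  · exact isGmTransposition_swap_s12 (ne_of_mem_of_not_mem hs fun h => hdisj hx h)
      (abs_sub_comm (x.val : ℤ) s ▸ hs₁ x hx)
  · exact isGmTransposition_swap_s12 (ne_of_mem_of_not_mem hy fun h => hdisj hr h).symm
      (abs_sub_comm (y.val : ℤ) r ▸ hr₂ y hy)

theorem sum_cycleCost_get {cs : List (List (Fin n))} (hnd : ∀ c ∈ cs, c.Nodup)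
    (hdisj : cs.Pairwise List.Disjoint) (hcover : ∀ x, ∃ c ∈ cs, x ∈ c)
    {S : Finset (Fin cs.length)} (hS : ∀ i, i ∈ S ↔ InLm n m (cs.get i)) :
    ∑ i, cycleCost n m (cs.get i) = n - cs.length + 2 * S.card := by
  classical
  have hlen : ∑ i : Fin cs.length, ((cs.get i).length : ℤ) = n := by
    have : ∑ i : Fin cs.length, (cs.get i).length = n := by
      simpa using sum_map_length_eq_card hnd hdisj hcover
    exact_mod_cast this
  simp only [cycleCost, ← hS]
  rw [Finset.sum_add_distrib, Finset.sum_sub_distrib, hlen, Finset.sum_ite_mem, Finset.univ_inter]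
  simp only [Finset.sum_const, Finset.card_univ, Fintype.card_fin, nsmul_eq_mul]
  ring

end Gm

theorem dist_le_of_cycle_decomposition_general (n m : ℕ)
    (hn : n ≤ 2 * m + 1) (σ : Equiv.Perm (Fin n)) (cs : List (List (Fin n))) (r s t : ℕ)
    (hr : cs.length = r)
    (hnd : ∀ c ∈ cs, c.Nodup)
    (hne : ∀ c ∈ cs, c ≠ [])
    (hdisj : cs.Pairwise fun c₁ c₂ => ∀ x ∈ c₁, x ∉ c₂)
    (hcover : ∀ x : Fin n, ∃ c ∈ cs, x ∈ c)
    (hprod : (cs.map List.formPerm).prod = σ)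
    (hs : ∃ S : Finset (Fin cs.length), S.card = s ∧
      ∀ i : Fin cs.length, i ∈ S ↔ InLm n m (cs.get i))
    (ht : ∃ P : Finset (Fin cs.length × Fin cs.length), P.card = t ∧
      (∀ p ∈ P, p.1 ≠ p.2 ∧ InLm n m (cs.get p.1) ∧ InLm n m (cs.get p.2) ∧
        CondRS n m (cs.get p.1) (cs.get p.2)) ∧
      (∀ p ∈ P, ∀ q ∈ P, p ≠ q →
        p.1 ≠ q.1 ∧ p.1 ≠ q.2 ∧ p.2 ≠ q.1 ∧ p.2 ≠ q.2)) :
    (permDist n m σ : ℤ) ≤ (n : ℤ) - r + 2 * s - 2 * t := by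
  obtain ⟨S, rfl, hS⟩ := hs
  obtain ⟨P, rfl, hP, hPdisj⟩ := ht
  subst hr hprod
  have hcomm := pairwise_commute_formPerm_get hdisj
  have hpair : ∀ p ∈ P, p.1 ≠ p.2 ∧ WordLengthLE {τ | IsGmTransposition n m τ}
      ((cs.get p.1).formPerm * (cs.get p.2).formPerm)
      (cycleCost n m (cs.get p.1) + cycleCost n m (cs.get p.2) - 2) := by
    intro p hp
    obtain ⟨hne, hL₁, hL₂, hrs⟩ := hP p hp
    refine ⟨hne, (wordLengthLE_formPerm_mul_of_condRS (hnd _ (List.get_mem cs _))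
      (hnd _ (List.get_mem cs _)) (hdisj.disjoint_get hne) hrs).mono ?_⟩
    rw [cycleCost_of_inLm hL₁, cycleCost_of_inLm hL₂]
    linarith
  have hword := WordLengthLE.noncommProd_of_pairs hcomm
    (fun i => wordLengthLE_formPerm_cycleCost hn (hnd _ (List.get_mem cs i))
      (hne _ (List.get_mem cs i))) hpair hPdisj Finset.univ (by simp)
  rw [← prod_map_formPerm_eq_noncommProd hcomm, sum_cycleCost_get hnd hdisj hcover hS] at hword
  exact (permDist_le_of_wordLengthLE hword).trans_eq (by ring)

/-- Let `5 ≤ n ≤ 2m + 1` and let `σ ∈ S_n` have disjoint cycle decomposition `C_1 ⋯ C_r`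
(fixed points counted as `1`-cycles; here the cycles are given by the list `cs` of the
lists of their terms).  If exactly `s` of the cycles belong to `L_m` and, among those,
there are `t` pairwise disjoint pairs of cycles each satisfying condition (rs), then
`d(1, σ, m) ≤ n - r + 2s - 2t`. -/
theorem dist_le_of_cycle_decomposition (n m : ℕ) (hm : 0 < m) (h5 : 5 ≤ n)
    (hn : n ≤ 2 * m + 1) (σ : Equiv.Perm (Fin n)) (cs : List (List (Fin n))) (r s t : ℕ)
    (hr : cs.length = r)
    (hnd : ∀ c ∈ cs, c.Nodup)
    (hne : ∀ c ∈ cs, c ≠ [])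
    (hdisj : cs.Pairwise fun c₁ c₂ => ∀ x ∈ c₁, x ∉ c₂)
    (hcover : ∀ x : Fin n, ∃ c ∈ cs, x ∈ c)
    (hprod : (cs.map List.formPerm).prod = σ)
    (hs : ∃ S : Finset (Fin cs.length), S.card = s ∧
      ∀ i : Fin cs.length, i ∈ S ↔ InLm n m (cs.get i))
    (ht : ∃ P : Finset (Fin cs.length × Fin cs.length), P.card = t ∧
      (∀ p ∈ P, p.1 ≠ p.2 ∧ InLm n m (cs.get p.1) ∧ InLm n m (cs.get p.2) ∧
        CondRS n m (cs.get p.1) (cs.get p.2)) ∧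
      (∀ p ∈ P, ∀ q ∈ P, p ≠ q →
        p.1 ≠ q.1 ∧ p.1 ≠ q.2 ∧ p.2 ≠ q.1 ∧ p.2 ≠ q.2)) :
    (permDist n m σ : ℤ) ≤ (n : ℤ) - r + 2 * s - 2 * t :=
  dist_le_of_cycle_decomposition_general n m hn σ cs r s t hr hnd hne hdisj hcover hprod hs ht
end
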